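/- arXiv:2303.00316 — 4 statements merged into one kernel-verified Lean document; each statement's English description precedes it below -/
import Mathlib

section
/- If A = v v* + D where v ∈ ℂ^n and D = diag(d_1,…,d_n) with all d_i ≥ 0, then for every permutation σ ∈ S_n the diagonal product l_σ(A) := ∏_{i=1}^n A_{i,σ(i)} is a nonnegative real number. -/
open scoped ComplexOrder

/-- If `A = v v* + diag(d₁,…,dₙ)` with all `dᵢ ≥ 0`, then every diagonal product
`l_σ(A) = ∏ i, A i (σ i)` is a nonnegative real number. -/
theorem stmt_1 {n : ℕ} (v : Fin n → ℂ) (d : Fin n → ℝ) (hd : ∀ i, 0 ≤ d i)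
    (A : Matrix (Fin n) (Fin n) ℂ)
    (hA : A = Matrix.of (fun i j => v i * star (v j)) +
        Matrix.diagonal (fun i => (d i : ℂ)))
    (σ : Equiv.Perm (Fin n)) :
    0 ≤ ∏ i, A i (σ i) := by
  classical
  have hfix : ∀ i, σ i = i → A i (σ i) = v i * star (v i) + (d i : ℂ) := by
    intro i h
    rw [h, hA]
    simp [Matrix.diagonal]
  have hnf : ∀ i, σ i ≠ i → A i (σ i) = v i * star (v (σ i)) := by
    intro i h
    rw [hA]
    simp [Matrix.add_apply, Matrix.diagonal_apply_ne _ (Ne.symm h)]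
  rw [← Finset.prod_filter_mul_prod_filter_not Finset.univ (fun i => σ i = i)]
  refine mul_nonneg (Finset.prod_nonneg fun i hi => ?_) ?_
  · rw [Finset.mem_filter] at hi
    rw [hfix i hi.2]
    refine add_nonneg (mul_star_self_nonneg _) ?_
    exact_mod_cast hd i
  · set s := Finset.univ.filter (fun i => ¬ σ i = i) with hs
    have h1 : ∏ i ∈ s, A i (σ i) = (∏ i ∈ s, v i) * star (∏ i ∈ s, v i) := by
      calc ∏ i ∈ s, A i (σ i) = ∏ i ∈ s, (v i * star (v (σ i))) := by
            refine Finset.prod_congr rfl fun i hi => ?_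
            rw [hs, Finset.mem_filter] at hi
            exact hnf i hi.2
        _ = (∏ i ∈ s, v i) * ∏ i ∈ s, star (v (σ i)) := Finset.prod_mul_distrib
        _ = (∏ i ∈ s, v i) * star (∏ i ∈ s, v (σ i)) := by
            simp only [← starRingEnd_apply, map_prod]
        _ = (∏ i ∈ s, v i) * star (∏ i ∈ s, v i) := by
            rw [Equiv.Perm.prod_comp σ s v (by intro a ha; simp [hs, ha])]
    rw [h1]
    exact mul_star_self_nonneg _
end

section
/- For any positive semidefinite matrix A ∈ M_n(ℂ), the sum of diagonal products over odd permutations is nonnegative: Σ_{σ ∈ O_n} ∏_{i=1}^n A_{i,σ(i)} ≥ 0, where O_n is the set of odd permutations of S_n. Equivalently, Σ_{σ ∈ A_n} ∏_{i=1}^n A_{i,σ(i)} ≤ per(A), i.e. d^{A_n}_1(A) ≤ per(A). -/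
/-!
Write `O(M)` for the sum of the diagonal products of `M` over odd permutations, so that
`2 O(M) = per M - det M`, and realise `A` as the Gram matrix of vectors `v₀, …, vₙ`. Split
`v₀ = p + w` with `p` in the span `K` of `v₁, …, vₙ` and `w ∈ Kᗮ`. Off the `(0, 0)` entry, `w`
is invisible in the Gram matrix of `v` and the Gram matrix of `w, v₁, …, vₙ` vanishes on row `0`,
while the `(0, 0)` entry splits as `‖p‖² + ‖w‖²`; so every diagonal product, hence `O`, is
additive along this splitting. The Gram matrix of `p, v₁, …, vₙ` is singular, so its `O` is
half its permanent, and permanents of positive semidefinite matrices are nonnegative because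
`n! per(Bᴴ B) = ∑_f |per B_f|²`, `B_f` running over the `n × n` matrices formed from rows of `B`.
The Gram matrix of `w, v₁, …, vₙ` is block diagonal, so its `O` is `‖w‖² O(v₁, …, vₙ)`, which is
nonnegative by induction.
-/

open scoped ComplexOrder

open Finset Equiv

namespace Matrix

section CommRing

variable {ι R : Type*} [Fintype ι] [DecidableEq ι] [CommRing R]

def evenPermSum (M : Matrix ι ι R) : R :=
  ∑ σ ∈ univ.filter (fun σ : Perm ι => Perm.sign σ = 1), ∏ i, M i (σ i)

def oddPermSum (M : Matrix ι ι R) : R :=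
  ∑ σ ∈ univ.filter (fun σ : Perm ι => Perm.sign σ = -1), ∏ i, M i (σ i)

theorem permanent_eq_sum_prod_apply (M : Matrix ι ι R) :
    M.permanent = ∑ σ : Perm ι, ∏ i, M i (σ i) := by
  rw [← permanent_transpose]
  rfl

theorem evenPermSum_add_oddPermSum (M : Matrix ι ι R) :
    M.evenPermSum + M.oddPermSum = M.permanent := by
  rw [evenPermSum, oddPermSum, sum_filter, sum_filter, ← sum_add_distrib,
    permanent_eq_sum_prod_apply]
  refine sum_congr rfl fun σ _ => ?_
  rcases Int.units_eq_one_or (Perm.sign σ) with h | h <;> simp [h]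

theorem evenPermSum_sub_oddPermSum (M : Matrix ι ι R) :
    M.evenPermSum - M.oddPermSum = M.det := by
  rw [evenPermSum, oddPermSum, sum_filter, sum_filter, ← sum_sub_distrib, ← det_transpose,
    det_apply']
  refine sum_congr rfl fun σ _ => ?_
  rcases Int.units_eq_one_or (Perm.sign σ) with h | h <;> simp [h]

theorem two_mul_oddPermSum (M : Matrix ι ι R) :
    2 * M.oddPermSum = M.permanent - M.det := by
  rw [← evenPermSum_add_oddPermSum, ← evenPermSum_sub_oddPermSum]
  ring

theorem prod_perm_apply_eq_add {A B C : Matrix ι ι R} {i₀ : ι}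
    (h₀ : A i₀ i₀ = B i₀ i₀ + C i₀ i₀) (hB : ∀ i j, (i ≠ i₀ ∨ j ≠ i₀) → B i j = A i j)
    (hC₀ : ∀ j ≠ i₀, C i₀ j = 0) (hC : ∀ i ≠ i₀, ∀ j ≠ i₀, C i j = A i j) (σ : Perm ι) :
    ∏ i, A i (σ i) = ∏ i, B i (σ i) + ∏ i, C i (σ i) := by
  by_cases hσ : σ i₀ = i₀
  · have hσ' : ∀ i ≠ i₀, σ i ≠ i₀ := fun i hi h => hi (σ.injective (h.trans hσ.symm))
    have hrest : ∀ i ∈ univ.erase i₀, B i (σ i) = A i (σ i) ∧ C i (σ i) = A i (σ i) :=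
      fun i hi => ⟨hB i _ (.inl (ne_of_mem_erase hi)),
        hC i (ne_of_mem_erase hi) _ (hσ' i (ne_of_mem_erase hi))⟩
    rw [← mul_prod_erase _ _ (mem_univ i₀), ← mul_prod_erase _ _ (mem_univ i₀),
      ← mul_prod_erase _ _ (mem_univ i₀), hσ, h₀, prod_congr rfl fun i hi => (hrest i hi).1,
      prod_congr rfl fun i hi => (hrest i hi).2, add_mul]
  · rw [prod_eq_zero (f := fun i => C i (σ i)) (mem_univ i₀) (hC₀ (σ i₀) hσ), add_zero]
    exact prod_congr rfl fun i _ => (hB i _ (by by_cases hi : i = i₀ <;> simp_all)).symm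

theorem oddPermSum_eq_add {A B C : Matrix ι ι R} {i₀ : ι}
    (h₀ : A i₀ i₀ = B i₀ i₀ + C i₀ i₀) (hB : ∀ i j, (i ≠ i₀ ∨ j ≠ i₀) → B i j = A i j)
    (hC₀ : ∀ j ≠ i₀, C i₀ j = 0) (hC : ∀ i ≠ i₀, ∀ j ≠ i₀, C i j = A i j) :
    A.oddPermSum = B.oddPermSum + C.oddPermSum := by
  simp only [oddPermSum, ← sum_add_distrib, prod_perm_apply_eq_add h₀ hB hC₀ hC]

theorem oddPermSum_eq_mul_submatrix_succ {n : ℕ}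
    {M : Matrix (Fin (n + 1)) (Fin (n + 1)) R} (h : ∀ j ≠ 0, M 0 j = 0) :
    M.oddPermSum = M 0 0 * (M.submatrix Fin.succ Fin.succ).oddPermSum := by
  rw [oddPermSum, oddPermSum, sum_filter, sum_filter, mul_sum, ← Perm.decomposeFin.symm.sum_comp,
    Fintype.sum_prod_type, Fintype.sum_eq_single 0]
  · refine sum_congr rfl fun τ _ => ?_
    simp only [Perm.decomposeFin.symm_sign, Fin.prod_univ_succ, Perm.decomposeFin_symm_apply_zero,
      Perm.decomposeFin_symm_apply_succ, if_pos, one_mul, swap_self, refl_apply, submatrix_apply]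
    split_ifs <;> simp
  · intro p hp
    refine sum_eq_zero fun τ _ => ?_
    simp [Fin.prod_univ_succ, h p hp]

end CommRing

section RCLike

variable {ι κ 𝕜 : Type*} [Fintype ι] [DecidableEq ι] [Fintype κ] [RCLike 𝕜]

theorem card_perm_mul_permanent_conjTranspose_mul_self (B : Matrix κ ι 𝕜) :
    (Fintype.card (Perm ι) : 𝕜) * (Bᴴ * B).permanent =
      ∑ f : ι → κ, star (B.submatrix f id).permanent * (B.submatrix f id).permanent := by
  have hexpand : (Bᴴ * B).permanent =
      ∑ f : ι → κ, star (B.submatrix f id).permanent * ∏ i, B (f i) i := by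
    rw [permanent]
    simp only [mul_apply, conjTranspose_apply, prod_univ_sum, Fintype.piFinset_univ]
    rw [sum_comm]
    refine sum_congr rfl fun f _ => ?_
    rw [permanent_eq_sum_prod_apply, star_sum, sum_mul]
    simp [prod_mul_distrib]
  have hsym : ∀ f : ι → κ, ∑ π : Perm ι, ∏ i, B ((f ∘ π) i) i = (B.submatrix f id).permanent :=
    fun f => rfl
  have hinv : ∀ (f : ι → κ) (π : Perm ι),
      (B.submatrix (f ∘ π) id).permanent = (B.submatrix f id).permanent :=
    fun f π => permanent_permute_cols π (B.submatrix f id)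
  calc (Fintype.card (Perm ι) : 𝕜) * (Bᴴ * B).permanent
      = ∑ π : Perm ι, ∑ f : ι → κ,
          star (B.submatrix (f ∘ π) id).permanent * ∏ i, B ((f ∘ π) i) i := by
        rw [← card_univ, ← nsmul_eq_mul, ← sum_const]
        refine sum_congr rfl fun π _ => ?_
        rw [hexpand]
        exact (Fintype.sum_equiv (π.symm.arrowCongr (Equiv.refl κ)) _ _ fun f => rfl).symm
    _ = ∑ f : ι → κ, star (B.submatrix f id).permanent * (B.submatrix f id).permanent := by
        rw [sum_comm]
        simp only [hinv, ← mul_sum, hsym]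

theorem permanent_conjTranspose_mul_self_nonneg (B : Matrix κ ι 𝕜) :
    0 ≤ (Bᴴ * B).permanent := by
  have hcard : (0 : 𝕜) < Fintype.card (Perm ι) := by exact_mod_cast Fintype.card_pos
  refine le_of_mul_le_mul_left ?_ hcard
  rw [mul_zero, card_perm_mul_permanent_conjTranspose_mul_self]
  exact sum_nonneg fun f _ => star_mul_self_nonneg _

theorem PosSemidef.exists_eq_conjTranspose_mul_self {A : Matrix ι ι 𝕜} (hA : A.PosSemidef) :
    ∃ B : Matrix ι ι 𝕜, A = Bᴴ * B := by
  open scoped MatrixOrder Matrix.Norms.L2Operator in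
  exact CStarAlgebra.nonneg_iff_eq_star_mul_self.mp hA.nonneg

theorem PosSemidef.permanent_nonneg {A : Matrix ι ι 𝕜} (hA : A.PosSemidef) : 0 ≤ A.permanent := by
  obtain ⟨B, rfl⟩ := hA.exists_eq_conjTranspose_mul_self
  exact permanent_conjTranspose_mul_self_nonneg B

theorem PosSemidef.exists_eq_gram {A : Matrix ι ι 𝕜} (hA : A.PosSemidef) :
    ∃ v : ι → EuclideanSpace 𝕜 ι, A = gram 𝕜 v := by
  obtain ⟨B, rfl⟩ := hA.exists_eq_conjTranspose_mul_self
  refine ⟨fun i => WithLp.toLp 2 fun k => B k i, ?_⟩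
  ext i j
  simp [mul_apply, PiLp.inner_apply, mul_comm]

theorem PosSemidef.oddPermSum_nonneg_of_det_eq_zero {A : Matrix ι ι 𝕜} (hA : A.PosSemidef)
    (hdet : A.det = 0) : 0 ≤ A.oddPermSum := by
  refine le_of_mul_le_mul_left ?_ (zero_lt_two' 𝕜)
  rw [mul_zero, two_mul_oddPermSum, hdet, sub_zero]
  exact hA.permanent_nonneg

end RCLike

section InnerProductSpace

open Submodule Set
open scoped InnerProductSpace

variable {𝕜 E : Type*} [RCLike 𝕜] [NormedAddCommGroup E] [InnerProductSpace 𝕜 E] {n : ℕ}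

theorem oddPermSum_gram_cons_nonneg_of_mem_span {u : Fin n → E} {p : E}
    (hp : p ∈ span 𝕜 (range u)) : 0 ≤ (gram 𝕜 (Fin.cons p u : Fin (n + 1) → E)).oddPermSum := by
  refine (posSemidef_gram 𝕜 _).oddPermSum_nonneg_of_det_eq_zero ?_
  by_contra hdet
  exact (linearIndependent_finCons.mp (det_gram_ne_zero_iff_linearIndependent.mp hdet)).2 hp

theorem oddPermSum_gram_cons_of_mem_orthogonal {u : Fin n → E} {w : E}
    (hw : w ∈ (span 𝕜 (range u))ᗮ) :
    (gram 𝕜 (Fin.cons w u : Fin (n + 1) → E)).oddPermSum = ⟪w, w⟫_𝕜 * (gram 𝕜 u).oddPermSum := by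
  refine oddPermSum_eq_mul_submatrix_succ fun j hj => ?_
  obtain ⟨k, rfl⟩ := Fin.exists_succ_eq_of_ne_zero hj
  exact inner_left_of_mem_orthogonal (subset_span (mem_range_self k)) hw

theorem oddPermSum_gram_cons_add {u : Fin n → E} {p w : E} (hp : p ∈ span 𝕜 (range u))
    (hw : w ∈ (span 𝕜 (range u))ᗮ) :
    (gram 𝕜 (Fin.cons (p + w) u : Fin (n + 1) → E)).oddPermSum =
      (gram 𝕜 (Fin.cons p u : Fin (n + 1) → E)).oddPermSum +
        (gram 𝕜 (Fin.cons w u : Fin (n + 1) → E)).oddPermSum := by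
  have hu : ∀ k, ⟪w, u k⟫_𝕜 = 0 ∧ ⟪u k, w⟫_𝕜 = 0 := fun k =>
    ⟨inner_left_of_mem_orthogonal (subset_span (mem_range_self k)) hw,
      inner_right_of_mem_orthogonal (subset_span (mem_range_self k)) hw⟩
  refine oddPermSum_eq_add (i₀ := 0) ?_ ?_ ?_ ?_
  · simp only [gram_apply, Fin.cons_zero, inner_add_left, inner_add_right,
      inner_left_of_mem_orthogonal hp hw, inner_right_of_mem_orthogonal hp hw]
    ring
  · intro i j hij
    induction i using Fin.cases <;> induction j using Fin.cases <;>
      simp_all [inner_add_left, inner_add_right]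
  · intro j hj
    obtain ⟨k, rfl⟩ := Fin.exists_succ_eq_of_ne_zero hj
    simp [hu]
  · intro i hi j hj
    obtain ⟨k, rfl⟩ := Fin.exists_succ_eq_of_ne_zero hi
    obtain ⟨l, rfl⟩ := Fin.exists_succ_eq_of_ne_zero hj
    rfl

theorem oddPermSum_gram_nonneg : ∀ {n : ℕ} (v : Fin n → E), 0 ≤ (gram 𝕜 v).oddPermSum
  | 0, v => by simp [oddPermSum]
  | n + 1, v => by
    obtain ⟨x, u, rfl⟩ : ∃ x u, v = Fin.cons x u := ⟨v 0, Fin.tail v, (Fin.cons_self_tail v).symm⟩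
    have : FiniteDimensional 𝕜 (span 𝕜 (range u)) := .span_of_finite 𝕜 (finite_range u)
    obtain ⟨p, hp, w, hw, rfl⟩ := (span 𝕜 (range u)).exists_add_mem_mem_orthogonal x
    rw [oddPermSum_gram_cons_add hp hw, oddPermSum_gram_cons_of_mem_orthogonal hw]
    exact add_nonneg (oddPermSum_gram_cons_nonneg_of_mem_span hp)
      (mul_nonneg ((posSemidef_gram 𝕜 ![w]).diag_nonneg (i := 0)) (oddPermSum_gram_nonneg u))

theorem PosSemidef.oddPermSum_nonneg {A : Matrix (Fin n) (Fin n) 𝕜} (hA : A.PosSemidef) :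
    0 ≤ A.oddPermSum := by
  obtain ⟨v, rfl⟩ := hA.exists_eq_gram
  exact oddPermSum_gram_nonneg v

theorem PosSemidef.evenPermSum_le_permanent {A : Matrix (Fin n) (Fin n) 𝕜} (hA : A.PosSemidef) :
    A.evenPermSum ≤ A.permanent := by
  rw [← evenPermSum_add_oddPermSum]
  exact le_add_of_nonneg_right hA.oddPermSum_nonneg

end InnerProductSpace

end Matrix

/-- For a positive semidefinite `A ∈ M_n(ℂ)`, the sum of diagonal products over odd
permutations is nonnegative; equivalently, `d^{Aₙ}_1(A) ≤ per(A)`. -/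
theorem stmt_5 {n : ℕ} (A : Matrix (Fin n) (Fin n) ℂ) (hA : A.PosSemidef) :
    0 ≤ (∑ σ ∈ Finset.univ.filter (fun σ : Equiv.Perm (Fin n) => Equiv.Perm.sign σ = -1),
        ∏ i, A i (σ i)) ∧
    (∑ σ ∈ Finset.univ.filter (fun σ : Equiv.Perm (Fin n) => Equiv.Perm.sign σ = 1),
        ∏ i, A i (σ i)) ≤ ∑ σ : Equiv.Perm (Fin n), ∏ i, A i (σ i) := by
  rw [← Matrix.permanent_eq_sum_prod_apply]
  exact ⟨hA.oddPermSum_nonneg, hA.evenPermSum_le_permanent⟩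
end

section
/- Schur's inequality: for any positive semidefinite matrix A ∈ M_n(ℂ), any finite subgroup G ≤ S_n, and any irreducible character χ of G, (1/χ(e)) d^G_χ(A) ≥ det(A). -/
/-!
Factor `A = Bᴴ B` with `B` upper triangular (Cholesky). Multiplying out the products gives
`d_χ(Bᴴ B) = ∑_g χ(g) ∑_f conj(t f) t(f ∘ g⁻¹)` over all maps `f : Fin n → Fin n`, where
`t f = ∏ᵢ B (f i) i`. Since `χ` is the character of a representation that can be made unitary,
`(χ(τ σ⁻¹))_{σ,τ}` is positive semidefinite, and by the Schur product theorem so is this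
`χ`-twisted form. Triangularity makes `t` vanish at every permutation except the identity, where it
is `det B`; splitting off that point of its orbit leaves `χ(1) |det B|² = χ(1) det A` plus the
twisted form of the remainder, which is nonnegative. For singular `A` only nonnegativity is needed.
-/

open CategoryTheory
open scoped ComplexOrder

open Matrix

theorem Equiv.Perm.exists_lt_apply_of_ne_one {ι : Type*} [LinearOrder ι] [WellFoundedLT ι]
    {π : Equiv.Perm ι} (hπ : π ≠ 1) : ∃ i, i < π i := by
  by_contra! hle
  obtain ⟨j, hj⟩ : ∃ j, π j ≠ j := by
    contrapose! hπ
    exact Equiv.ext hπ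
  obtain ⟨i, hi, hmin⟩ := wellFounded_lt.has_min {i | π i ≠ i} ⟨j, hj⟩
  have hlt : π i < i := lt_of_le_of_ne (hle i) hi
  have hfix : π (π i) = π i := by_contra fun h => hmin (π i) h hlt
  exact hi (π.injective hfix)

theorem Matrix.IsUpperTriangular.prod_apply_perm_eq_zero {ι R : Type*} [LinearOrder ι]
    [WellFoundedLT ι] [Fintype ι] [CommMonoidWithZero R] {B : Matrix ι ι R}
    (hB : B.IsUpperTriangular) {π : Equiv.Perm ι} (hπ : π ≠ 1) : ∏ i, B (π i) i = 0 := by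
  obtain ⟨i, hi⟩ := π.exists_lt_apply_of_ne_one hπ
  exact Finset.prod_eq_zero (Finset.mem_univ i) (hB hi)

theorem Matrix.PosDef.exists_isUpperTriangular_eq_conjTranspose_mul
    {𝕜 n : Type*} [RCLike 𝕜] [LinearOrder n] [WellFoundedLT n] [LocallyFiniteOrderBot n]
    [Fintype n] {A : Matrix n n 𝕜} (hA : A.PosDef) :
    ∃ B : Matrix n n 𝕜, B.IsUpperTriangular ∧ A = Bᴴ * B := by
  set L := LDL.lower hA
  have hL : L.BlockTriangular OrderDual.toDual := by
    have : Invertible (LDL.lowerInv hA) := LDL.invertibleLowerInv hA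
    exact blockTriangular_inv_of_blockTriangular fun i j hij => LDL.lowerInv_triangular hA hij
  have hd : ∀ i, 0 ≤ LDL.diagEntries hA i := by
    have := hA.posSemidef.mul_mul_conjTranspose_same (LDL.lowerInv hA)
    rwa [← LDL.diag_eq_lowerInv_conj, LDL.diag, posSemidef_diagonal_iff] at this
  set r : n → 𝕜 := fun i => (√(RCLike.re (LDL.diagEntries hA i)) : 𝕜)
  have hr : ∀ i, star (r i) * r i = LDL.diagEntries hA i := fun i => by
    obtain ⟨hre, him⟩ := RCLike.nonneg_iff.mp (hd i)
    rw [RCLike.star_def, RCLike.conj_ofReal, ← RCLike.ofReal_mul, Real.mul_self_sqrt hre]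
    exact RCLike.ext (by simp) (by simp [him])
  refine ⟨diagonal r * Lᴴ, fun i j hij => ?_, ?_⟩
  · simp [diagonal_mul, hL hij]
  · rw [conjTranspose_mul, conjTranspose_conjTranspose, diagonal_conjTranspose, Matrix.mul_assoc,
      ← Matrix.mul_assoc _ (diagonal r), diagonal_mul_diagonal']
    simp only [Pi.star_apply, hr, ← Matrix.mul_assoc]
    exact (LDL.lower_conj_diag hA).symm

theorem Matrix.exists_unitary_trace_eq {𝕜 G ι : Type*} [RCLike 𝕜] [Group G] [Fintype G]
    [Fintype ι] [DecidableEq ι] (ρ : G →* Matrix ι ι 𝕜) :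
    ∃ U : G →* unitaryGroup ι 𝕜, ∀ g, (U g : Matrix ι ι 𝕜).trace = (ρ g).trace := by
  have hQ : (∑ g, star (ρ g) * ρ g).PosDef := by
    classical
    rw [← Finset.add_sum_erase _ _ (Finset.mem_univ (1 : G)), map_one, star_one, one_mul]
    exact PosDef.one.add_posSemidef
      (posSemidef_sum _ fun g _ => posSemidef_conjTranspose_mul_self _)
  set Q := ∑ g, star (ρ g) * ρ g
  have hQ_inv (h : G) : star (ρ h) * Q * ρ h = Q := by
    simp only [Q, Finset.mul_sum, Finset.sum_mul]
    exact Fintype.sum_equiv (Equiv.mulRight h) _ _ fun g => by simp [mul_assoc]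
  obtain ⟨C, hC, hQC⟩ : ∃ C, IsUnit C ∧ Q = star C * C := by
    open scoped MatrixOrder in
    exact CStarAlgebra.isStrictlyPositive_iff_eq_star_mul_self.mp hQ.isStrictlyPositive
  obtain ⟨⟨C, D, hCD, hDC⟩, rfl⟩ := hC
  have hmem (g : G) : C * ρ g * D ∈ unitaryGroup ι 𝕜 := by
    rw [mem_unitaryGroup_iff']
    calc star (C * ρ g * D) * (C * ρ g * D) = star D * (star (ρ g) * Q * ρ g) * D := by
          rw [hQC]; simp only [star_mul, mul_assoc]
      _ = star (C * D) * (C * D) := by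
          rw [hQ_inv, hQC]; simp only [star_mul, mul_assoc]
      _ = 1 := by simp [hCD]
  refine ⟨{ toFun := fun g => ⟨_, hmem g⟩, map_one' := ?_, map_mul' := ?_ }, fun g => ?_⟩
  · ext1; simp [hCD]
  · intro g h; ext1; simp [mul_assoc, ← mul_assoc D C, hDC]
  · simp [trace_mul_cycle, hDC]

theorem Matrix.posSemidef_trace_unitary_mul_inv {𝕜 G ι : Type*} [RCLike 𝕜] [Group G]
    [Fintype G] [Fintype ι] [DecidableEq ι] (U : G →* unitaryGroup ι 𝕜) :
    (Matrix.of fun σ τ : G => (U (τ * σ⁻¹) : Matrix ι ι 𝕜).trace).PosSemidef := by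
  convert posSemidef_conjTranspose_mul_self
    (Matrix.of fun (kl : ι × ι) (σ : G) => (U σ : Matrix ι ι 𝕜) kl.1 kl.2)
  ext σ τ
  rw [of_apply, map_mul, map_inv, Submonoid.coe_mul, ← Unitary.star_eq_inv, Unitary.coe_star]
  simp [trace, mul_apply, Fintype.sum_prod_type, mul_comm]

theorem FDRep.posSemidef_character_mul_inv {G : Type} [Group G] [Fintype G] (V : FDRep ℂ G) :
    (Matrix.of fun σ τ : G => V.character (τ * σ⁻¹)).PosSemidef := by
  let b := Module.finBasis ℂ V
  obtain ⟨U, hU⟩ := exists_unitary_trace_eq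
    ((MonoidHomClass.toMonoidHom (LinearMap.toMatrixAlgEquiv b)).comp V.ρ)
  have hχ (g : G) : V.character g = (U g : Matrix (Fin (Module.finrank ℂ V)) _ ℂ).trace := by
    rw [hU, FDRep.character, LinearMap.trace_eq_matrix_trace ℂ b]
    rfl
  simpa only [hχ] using posSemidef_trace_unitary_mul_inv U

theorem FDRep.finrank_pos_of_simple {G : Type} [Group G] (V : FDRep ℂ G) [Simple V] :
    0 < Module.finrank ℂ V := by
  refine Nat.pos_of_ne_zero fun h => id_nonzero V ?_
  have := Module.finrank_zero_iff.mp h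
  apply Action.Hom.ext
  ext x
  exact Subsingleton.elim _ _

section TwistedInner

variable {𝕜 G X : Type*} [RCLike 𝕜] [Group G] [Fintype G] [MulAction G X] [Fintype X]

theorem Fintype.sum_sum_mul_inv {M : Type*} [AddCommMonoid M] (F : G → M) :
    ∑ σ : G, ∑ τ : G, F (τ * σ⁻¹) = Fintype.card G • ∑ g, F g := by
  rw [← Finset.card_univ, ← Finset.sum_const]
  exact Finset.sum_congr rfl fun σ _ => Fintype.sum_equiv (Equiv.mulRight σ⁻¹) _ _ fun _ => rfl

variable (χ : G → 𝕜)

def twistedInner (u v : X → 𝕜) : 𝕜 :=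
  ∑ g, χ g * ∑ x, star (u x) * v (g • x)

theorem twistedInner_self_nonneg (hχ : (Matrix.of fun σ τ : G => χ (τ * σ⁻¹)).PosSemidef)
    (s : X → 𝕜) : 0 ≤ twistedInner χ s s := by
  have hgram : (Matrix.of fun σ τ : G => ∑ x, star (s (σ • x)) * s (τ • x)).PosSemidef := by
    convert posSemidef_conjTranspose_mul_self (Matrix.of fun (x : X) (σ : G) => s (σ • x))
    ext σ τ
    simp [Matrix.mul_apply]
  have hgram_apply (σ τ : G) : ∑ x, star (s (σ • x)) * s (τ • x) =
      ∑ x, star (s x) * s ((τ * σ⁻¹) • x) :=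
    Fintype.sum_equiv (MulAction.toPerm σ) _ _ fun x => by simp [mul_smul]
  -- The sum of all entries of the Hadamard product of the kernel of `χ` with this Gram matrix
  -- is `|G|` times the twisted form.
  have hsum := (hχ.hadamard hgram).dotProduct_mulVec_nonneg 1
  simp only [dotProduct, mulVec, hadamard, of_apply, hgram_apply, Pi.star_apply, Pi.one_apply,
    star_one, one_mul, mul_one] at hsum
  rw [Fintype.sum_sum_mul_inv fun g => χ g * ∑ x, star (s x) * s (g • x), nsmul_eq_mul] at hsum
  exact le_of_mul_le_mul_left (by rwa [mul_zero]) (Nat.cast_pos.mpr Fintype.card_pos)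

theorem twistedInner_self_eq_add_update [DecidableEq X] (s : X → 𝕜) (x₀ : X)
    (hs : ∀ g : G, g ≠ 1 → s (g • x₀) = 0) :
    twistedInner χ s s = χ 1 * (star (s x₀) * s x₀) +
      twistedInner χ (Function.update s x₀ 0) (Function.update s x₀ 0) := by
  set w := Function.update s x₀ 0
  have hpoint (g : G) (x : X) : star (s x) * s (g • x) =
      (if x = x₀ then star (s x₀) * s (g • x₀) else 0) + star (w x) * w (g • x) := by
    by_cases hx : x = x₀
    · subst hx; simp [w]
    by_cases hgx : g • x = x₀
    · have hsx : s x = 0 := by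
        have hx' : x = g⁻¹ • x₀ := by rw [← hgx, inv_smul_smul]
        refine hx' ▸ hs _ fun h => hx ?_
        rw [hx', h, one_smul]
      simp [w, hx, hsx]
    · simp [w, hx, hgx]
  have hrow (g : G) : ∑ x, star (s x) * s (g • x) =
      star (s x₀) * s (g • x₀) + ∑ x, star (w x) * w (g • x) := by
    rw [Finset.sum_congr rfl fun x _ => hpoint g x, Finset.sum_add_distrib, Finset.sum_ite_eq',
      if_pos (Finset.mem_univ _)]
  simp only [twistedInner, hrow, mul_add, Finset.sum_add_distrib]
  congr 1
  rw [Finset.sum_eq_single 1 (fun g _ hg => by rw [hs g hg, mul_zero, mul_zero]) (by simp),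
    one_smul]

end TwistedInner

section GeneralizedMatrixFunction

variable {𝕜 ι : Type*} [RCLike 𝕜] [Fintype ι] {G : Subgroup (Equiv.Perm ι)} [Fintype G]

def Matrix.generalizedMatrixFunction (χ : G → 𝕜) (A : Matrix ι ι 𝕜) : 𝕜 :=
  ∑ g : G, χ g * ∏ i, A i ((g : Equiv.Perm ι) i)

theorem Matrix.prod_conjTranspose_mul_apply_perm [DecidableEq ι] (B : Matrix ι ι 𝕜)
    (σ : Equiv.Perm ι) :
    ∏ i, (Bᴴ * B) i (σ i) = ∑ f : ι → ι, star (∏ i, B (f i) i) * ∏ i, B (f (σ⁻¹ i)) i := by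
  simp only [mul_apply, conjTranspose_apply, Fintype.prod_sum, Finset.prod_mul_distrib, star_prod]
  refine Finset.sum_congr rfl fun f _ => congrArg _ ?_
  rw [← Equiv.prod_comp σ fun j => B (f (σ⁻¹ j)) j]
  simp

-- `g` acts on maps `f : ι → ι` by `f ↦ f ∘ g⁻¹`.
attribute [local instance] arrowAction

theorem Matrix.generalizedMatrixFunction_conjTranspose_mul [DecidableEq ι] (χ : G → 𝕜)
    (B : Matrix ι ι 𝕜) :
    (Bᴴ * B).generalizedMatrixFunction χ =
      twistedInner χ (fun f : ι → ι => ∏ i, B (f i) i) (fun f => ∏ i, B (f i) i) := by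
  simp only [generalizedMatrixFunction, twistedInner, prod_conjTranspose_mul_apply_perm]
  rfl

theorem Matrix.PosSemidef.mul_det_le_generalizedMatrixFunction [LinearOrder ι] [WellFoundedLT ι]
    [LocallyFiniteOrderBot ι] {A : Matrix ι ι 𝕜} (hA : A.PosSemidef) {χ : G → 𝕜}
    (hχ : (Matrix.of fun σ τ : G => χ (τ * σ⁻¹)).PosSemidef) :
    χ 1 * A.det ≤ A.generalizedMatrixFunction χ := by
  by_cases hdet : A.det = 0
  · obtain ⟨B, rfl⟩ : ∃ B : Matrix ι ι 𝕜, A = Bᴴ * B := by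
      open scoped MatrixOrder in exact CStarAlgebra.nonneg_iff_eq_star_mul_self.mp hA.nonneg
    rw [hdet, mul_zero, generalizedMatrixFunction_conjTranspose_mul]
    exact twistedInner_self_nonneg χ hχ _
  obtain ⟨B, hB, rfl⟩ :=
    (hA.posDef_iff_det_ne_zero.mpr hdet).exists_isUpperTriangular_eq_conjTranspose_mul
  have hdiag : ∏ i, B (id i) i = B.det := (det_of_isUpperTriangular hB).symm
  rw [generalizedMatrixFunction_conjTranspose_mul, twistedInner_self_eq_add_update χ _ id, hdiag,
    det_mul, det_conjTranspose]
  · exact le_add_of_nonneg_right (twistedInner_self_nonneg χ hχ _)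
  · intro g hg
    exact hB.prod_apply_perm_eq_zero (inv_ne_one.mpr (Subtype.coe_injective.ne hg))

end GeneralizedMatrixFunction

/-- Schur's inequality: for a positive semidefinite `A ∈ M_n(ℂ)`, a finite subgroup
`G ≤ Sₙ` and an irreducible character `χ` of `G`, `(1/χ(e)) d^G_χ(A) ≥ det A`. -/
theorem stmt_12 {n : ℕ} (A : Matrix (Fin n) (Fin n) ℂ) (hA : A.PosSemidef)
    (G : Subgroup (Equiv.Perm (Fin n))) [Fintype G]
    (V : FDRep ℂ G) [Simple V] :
    A.det ≤ (V.character 1)⁻¹ *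
      ∑ g : G, V.character g * ∏ i, A i ((g : Equiv.Perm (Fin n)) i) := by
  have hdim : 0 < V.character 1 := by
    rw [FDRep.char_one]
    exact_mod_cast V.finrank_pos_of_simple
  rw [le_inv_mul_iff₀ hdim]
  exact hA.mul_det_le_generalizedMatrixFunction V.posSemidef_character_mul_inv
end

section
/- Generalized Cauchy–Binet identity specialization: for a positive semidefinite A = L L* ∈ M_n(ℂ) with L lower triangular, a finite subgroup G ≤ S_n and an irreducible character χ of G, the normalized generalized matrix function satisfies (1/χ(e)) d^G_χ(A) = (1/|G|) Σ_{γ ∈ Ω} |d^G_χ(L[id|γ])|², where Ω = {γ ∈ {1,…,n}^n : Σ_{g ∈ G_γ} χ(g) ≠ 0}, G_γ = {g ∈ G : γ∘g = γ}, and L[id|γ]_{ij} = L_{i,γ(j)}. In particular (1/χ(e)) d^G_χ(A) ≥ 0. -/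
/-
Expanding `∏ᵢ A_{i,g(i)}` for `A = L L*` and regrouping by the column map `γ` (generalized
Cauchy–Binet) gives `∑_γ |d^G_χ(L[id|γ])|² = d^G_ψ(A)` with `ψ(u) = ∑_τ conj χ(τ) χ(τ u)`.
Since `conj χ(τ) = χ(τ⁻¹)`, Schur's lemma applied to `∑_τ χ(τ⁻¹) ρ(τ)` shows `ψ = (|G| / χ(e)) χ`.
Finally `d^G_χ(L[id|γ]) = 0` for `γ ∉ Ω`: if `∑_{G_γ} χ = 0`, then `G_γ` fixes no nonzero vector
of `V`, so `∑_{h ∈ G_γ} ρ(h) = 0`, and averaging `d^G_χ(L[id|γ])` over `G_γ` kills it.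
-/

open CategoryTheory
open scoped Classical ComplexOrder
open scoped Matrix

theorem Matrix.trace_map_inv_eq_star_trace {Γ ι 𝕜 : Type*} [Group Γ] [Fintype Γ]
    [Fintype ι] [DecidableEq ι] [RCLike 𝕜] (M : Γ →* Matrix ι ι 𝕜) (g : Γ) :
    (M g⁻¹).trace = star (M g).trace := by
  set P := ∑ h, (M h)ᴴ * M h with hPdef
  have hP : P.PosDef := by
    rw [hPdef, Fintype.sum_eq_add_sum_compl (1 : Γ), map_one, conjTranspose_one, one_mul]
    exact PosDef.one.add_posSemidef
      (posSemidef_sum _ fun h _ => posSemidef_conjTranspose_mul_self _)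
  -- every `M g` is unitary for the invariant positive definite form `P`
  have hinvariant : (M g)ᴴ * P * M g = P := by
    rw [hPdef, Finset.mul_sum, Finset.sum_mul]
    refine Fintype.sum_equiv (Equiv.mulRight g) _ _ fun h => ?_
    simp only [Equiv.coe_mulRight, map_mul, conjTranspose_mul, Matrix.mul_assoc]
  have hdet : IsUnit P.det := (isUnit_iff_isUnit_det _).mp hP.isUnit
  have hcomm : (M g)ᴴ * P = P * M g⁻¹ := by
    calc (M g)ᴴ * P = (M g)ᴴ * P * M g * M g⁻¹ := by
          rw [Matrix.mul_assoc _ (M g), ← map_mul, mul_inv_cancel, map_one, Matrix.mul_one]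
      _ = P * M g⁻¹ := by rw [hinvariant]
  have hconj : (M g)ᴴ = P * M g⁻¹ * P⁻¹ := by
    rw [← hcomm, Matrix.mul_assoc, mul_nonsing_inv _ hdet, Matrix.mul_one]
  rw [← trace_conjTranspose, hconj, Matrix.mul_assoc, trace_mul_comm, Matrix.mul_assoc,
    nonsing_inv_mul _ hdet, Matrix.mul_one]

namespace FDRep

theorem sum_char_mul_eq_zero {k : Type} [Field k] [CharZero k] {Γ : Type} [Group Γ]
    (V : FDRep k Γ) (H : Subgroup Γ) [Fintype H] (hH : ∑ h : H, V.character h = 0) (g : Γ) :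
    ∑ h : H, V.character (h * g) = 0 := by
  let ρ : Representation k H V := V.ρ.comp H.subtype
  let : Invertible (Fintype.card H : k) := invertibleOfNonzero (by simp)
  let : Invertible (Nat.card H : k) := invertibleOfNonzero (by simp)
  have hinv : ρ.invariants = ⊥ := by
    have h := ρ.card_inv_mul_sum_char_eq_finrank
    rw [show ∑ h, ρ.character h = 0 from hH, mul_zero, eq_comm, Nat.cast_eq_zero] at h
    exact Submodule.finrank_eq_zero.mp h
  have havg : ρ.averageMap = 0 := by
    ext v
    simpa [hinv] using (Representation.isProj_averageMap ρ).map_mem v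
  have hsum : ∑ h : H, V.ρ h = 0 := by
    simp only [Representation.averageMap, GroupAlgebra.average, map_smul, map_sum,
      Representation.asAlgebraHom_of, smul_eq_zero] at havg
    exact havg.resolve_left (by simp)
  simp only [character, map_mul, ← map_sum, ← Finset.sum_mul, hsum, zero_mul, map_zero]

variable {Γ : Type} [Group Γ] [Fintype Γ]

theorem char_inv {𝕜 : Type} [RCLike 𝕜] (V : FDRep 𝕜 Γ) (g : Γ) :
    V.character g⁻¹ = star (V.character g) := by
  let b := Module.finBasis 𝕜 V
  simp only [character, LinearMap.trace_eq_matrix_trace 𝕜 b]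
  exact Matrix.trace_map_inv_eq_star_trace ((LinearMap.toMatrixAlgEquiv b).toMonoidHom.comp V.ρ) g

theorem exists_sum_smul_ρ_eq_smul_id (V : FDRep ℂ Γ) [Simple V] (f : Γ → ℂ)
    (hf : ∀ g h, f (h * g * h⁻¹) = f g) :
    ∃ c : ℂ, ∑ g, f g • V.ρ g = c • LinearMap.id := by
  set z := ∑ g, f g • V.ρ g
  have hcomm : ∀ s, V.ρ s * z = z * V.ρ s := by
    intro s
    simp only [z, Finset.mul_sum, Finset.sum_mul, mul_smul_comm, smul_mul_assoc, ← map_mul]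
    refine Fintype.sum_equiv ((Equiv.mulLeft s).trans (Equiv.mulRight s⁻¹)) _ _ fun g => ?_
    simp [hf]
  let φ : V ⟶ V := ⟨InducedCategory.homMk (ModuleCat.ofHom z), fun s => by
    apply InducedCategory.hom_ext
    apply ModuleCat.hom_ext
    exact (hcomm s).symm⟩
  obtain ⟨c, hc⟩ := endomorphism_simple_eq_smul_id ℂ φ
  exact ⟨c, (congrArg (fun f : V ⟶ V => f.hom.hom.hom) hc).symm⟩

theorem sum_char_mul_char_inv (V : FDRep ℂ Γ) [Simple V] :
    ∑ g, V.character g * V.character g⁻¹ = Fintype.card Γ := by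
  let : Invertible (Nat.card Γ : ℂ) := invertibleOfNonzero (by simp)
  have h := char_orthonormal V V
  rw [if_pos ⟨Iso.refl V⟩, Nat.card_eq_fintype_card] at h
  field_simp at h
  exact h

theorem char_one_ne_zero (V : FDRep ℂ Γ) [Simple V] : V.character 1 ≠ 0 := by
  intro h
  have : Subsingleton V := by
    rw [char_one, Nat.cast_eq_zero] at h
    exact Module.finrank_zero_iff.mp h
  have hzero : ∀ g, V.character g = 0 := fun g => by
    rw [character, Subsingleton.elim (V.ρ g) 0, map_zero]
  have := sum_char_mul_char_inv V
  simp only [hzero, zero_mul, Finset.sum_const_zero] at this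
  exact Fintype.card_ne_zero (Nat.cast_eq_zero.mp this.symm)

theorem char_one_mul_sum_star_char_mul_char_mul (V : FDRep ℂ Γ) [Simple V] (u : Γ) :
    V.character 1 * ∑ g, star (V.character g) * V.character (g * u) =
      Fintype.card Γ * V.character u := by
  obtain ⟨c, hc⟩ := exists_sum_smul_ρ_eq_smul_id V (fun g => V.character g⁻¹) fun g h => by
    simp only [mul_inv_rev, inv_inv, ← mul_assoc, char_conj]
  have hcard : c * V.character 1 = Fintype.card Γ := by
    have := congrArg (LinearMap.trace ℂ V) hc
    simp only [map_sum, map_smul, smul_eq_mul, LinearMap.trace_id] at this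
    rw [char_one, ← sum_char_mul_char_inv V, ← this]
    exact Finset.sum_congr rfl fun g _ => mul_comm _ _
  have hconv : ∑ g, V.character g⁻¹ * V.character (g * u) = c * V.character u := by
    have := congrArg (fun T => LinearMap.trace ℂ V (T * V.ρ u)) hc
    simpa [Finset.sum_mul, smul_mul_assoc, character, ← Module.End.one_eq_id] using this
  simp only [← char_inv]
  rw [hconv, ← hcard]
  ring

end FDRep

def Subgroup.precompStabilizer {ι κ : Type*} (G : Subgroup (Equiv.Perm ι)) (γ : ι → κ) :
    Subgroup G where
  carrier := {g | γ ∘ (g : Equiv.Perm ι) = γ}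
  one_mem' := rfl
  mul_mem' {a b} ha hb := by
    simp only [Set.mem_ofPred_eq, Subgroup.coe_mul, Equiv.Perm.coe_mul] at *
    rw [← Function.comp_assoc, ha, hb]
  inv_mem' {a} ha := by
    simp only [Set.mem_ofPred_eq, Subgroup.coe_inv] at *
    conv_lhs => rw [← ha]
    ext; simp

@[simp]
theorem Subgroup.mem_precompStabilizer {ι κ : Type*} {G : Subgroup (Equiv.Perm ι)}
    {γ : ι → κ} {g : G} : g ∈ G.precompStabilizer γ ↔ γ ∘ (g : Equiv.Perm ι) = γ :=
  Iff.rfl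

theorem Equiv.Perm.sum_precomp {ι κ M : Type*} [Fintype ι] [DecidableEq ι] [Fintype κ]
    [AddCommMonoid M] (p : Equiv.Perm ι) (F : (ι → κ) → M) :
    ∑ γ : ι → κ, F (γ ∘ p) = ∑ γ, F γ :=
  Fintype.sum_equiv (p.symm.arrowCongr (Equiv.refl κ)) _ _ fun _ => rfl

namespace Matrix

variable {ι κ R : Type*} [Fintype ι]

def generalizedMatrixFunction_s19 [CommSemiring R] (G : Subgroup (Equiv.Perm ι)) [Fintype G]
    (f : G → R) (B : Matrix ι ι R) : R :=
  ∑ g : G, f g * ∏ i, B i ((g : Equiv.Perm ι) i)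

theorem generalizedMatrixFunction_submatrix_eq_zero [CommSemiring R] [IsAddTorsionFree R]
    (G : Subgroup (Equiv.Perm ι)) [Fintype G] (f : G → R) (L : Matrix ι κ R) (γ : ι → κ)
    [Fintype (G.precompStabilizer γ)]
    (hf : ∀ σ, ∑ h : G.precompStabilizer γ, f (h * σ) = 0) :
    generalizedMatrixFunction_s19 G f (L.submatrix id γ) = 0 := by
  have htranslate : ∀ h : G.precompStabilizer γ, generalizedMatrixFunction_s19 G f (L.submatrix id γ)
      = ∑ σ : G, f (h * σ) * ∏ i, L i (γ ((σ : Equiv.Perm ι) i)) := fun h => by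
    refine (Fintype.sum_equiv (Equiv.mulLeft (h : G)) _ _ fun σ => ?_).symm
    have hγ : ∀ i, γ ((h : Equiv.Perm ι) i) = γ i := congrFun h.prop
    simp [hγ]
  have hzero : Fintype.card (G.precompStabilizer γ) •
      generalizedMatrixFunction_s19 G f (L.submatrix id γ) = 0 := by
    rw [← Finset.card_univ, ← Finset.sum_const, Fintype.sum_congr _ _ htranslate,
      Finset.sum_comm]
    simp [← Finset.sum_mul, hf]
  exact (nsmul_eq_zero_iff_right Fintype.card_ne_zero).mp hzero

variable [DecidableEq ι] [Fintype κ] [CommSemiring R] [StarRing R]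

theorem prod_mul_conjTranspose_apply (L : Matrix ι κ R) (p : Equiv.Perm ι) :
    ∏ i, (L * Lᴴ) i (p i) = ∑ γ : ι → κ, star (∏ i, L i (γ i)) * ∏ i, L i (γ (p i)) := by
  simp only [mul_apply, conjTranspose_apply, Fintype.prod_sum, Finset.prod_mul_distrib, star_prod]
  refine Fintype.sum_equiv (p.arrowCongr (Equiv.refl κ)) _ _ fun γ => ?_
  rw [mul_comm]
  congr 1
  · exact Fintype.prod_equiv p _ _ fun i => by simp
  · exact Fintype.prod_congr _ _ fun i => by simp

theorem sum_star_prod_comp_mul_prod_comp (L : Matrix ι κ R) (τ σ : Equiv.Perm ι) :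
    ∑ γ : ι → κ, star (∏ i, L i (γ (τ i))) * ∏ i, L i (γ (σ i)) =
      ∏ i, (L * Lᴴ) i ((τ⁻¹ * σ) i) := by
  rw [prod_mul_conjTranspose_apply]
  conv_rhs => rw [← τ.sum_precomp]
  simp [Equiv.Perm.mul_apply]

theorem sum_star_generalizedMatrixFunction_mul_self (G : Subgroup (Equiv.Perm ι)) [Fintype G]
    (f : G → R) (L : Matrix ι κ R) :
    ∑ γ : ι → κ, star (generalizedMatrixFunction_s19 G f (L.submatrix id γ)) *
        generalizedMatrixFunction_s19 G f (L.submatrix id γ) =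
      generalizedMatrixFunction_s19 G (fun u => ∑ τ, star (f τ) * f (τ * u)) (L * Lᴴ) := by
  let P (p : Equiv.Perm ι) := ∏ i, (L * Lᴴ) i (p i)
  calc _ = ∑ γ : ι → κ, ∑ σ : G, ∑ τ : G, star (f τ) * f σ *
          (star (∏ i, L i (γ ((τ : Equiv.Perm ι) i))) * ∏ i, L i (γ ((σ : Equiv.Perm ι) i))) := by
        simp only [generalizedMatrixFunction_s19, submatrix_apply, id, star_sum, star_mul',
          Finset.sum_mul, Finset.mul_sum]
        exact Fintype.sum_congr _ _ fun γ => Fintype.sum_congr _ _ fun σ =>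
          Fintype.sum_congr _ _ fun τ => by ring
    _ = ∑ σ : G, ∑ τ : G, ∑ γ : ι → κ, star (f τ) * f σ *
          (star (∏ i, L i (γ ((τ : Equiv.Perm ι) i))) * ∏ i, L i (γ ((σ : Equiv.Perm ι) i))) :=
        Finset.sum_comm.trans (Fintype.sum_congr _ _ fun σ => Finset.sum_comm)
    _ = ∑ τ : G, ∑ σ : G, star (f τ) * f σ * P (τ⁻¹ * σ : G) := by
        rw [Finset.sum_comm]
        simp only [← Finset.mul_sum, sum_star_prod_comp_mul_prod_comp, P, Subgroup.coe_mul,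
          Subgroup.coe_inv]
    _ = ∑ τ : G, ∑ u : G, star (f τ) * f (τ * u) * P u := by
        refine Fintype.sum_congr _ _ fun τ =>
          Fintype.sum_equiv (Equiv.mulLeft τ⁻¹) _ _ fun σ => ?_
        simp
    _ = _ := by
        simp only [generalizedMatrixFunction_s19, Finset.sum_mul]
        exact Finset.sum_comm

end Matrix

theorem stmt_19_general {n : ℕ} (A L : Matrix (Fin n) (Fin n) ℂ)
    (hA : A = L * L.conjTranspose)
    (G : Subgroup (Equiv.Perm (Fin n))) [Fintype G]
    (V : FDRep ℂ G) [Simple V] :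
    ((V.character 1)⁻¹ *
        ∑ g : G, V.character g * ∏ i, A i ((g : Equiv.Perm (Fin n)) i) =
      ((Fintype.card G : ℂ))⁻¹ *
        ∑ γ ∈ Finset.univ.filter (fun γ : Fin n → Fin n =>
            (∑ g ∈ Finset.univ.filter
                (fun g : G => γ ∘ (g : Equiv.Perm (Fin n)) = γ), V.character g) ≠ 0),
          (Complex.normSq
            (∑ σ : G, V.character σ * ∏ j, L j (γ ((σ : Equiv.Perm (Fin n)) j))) : ℂ)) ∧
    0 ≤ (V.character 1)⁻¹ *
        ∑ g : G, V.character g * ∏ i, A i ((g : Equiv.Perm (Fin n)) i) := by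
  set Ω := Finset.univ.filter (fun γ : Fin n → Fin n =>
    (∑ g ∈ Finset.univ.filter
      (fun g : G => γ ∘ (g : Equiv.Perm (Fin n)) = γ), V.character g) ≠ 0)
  let d (γ : Fin n → Fin n) := Matrix.generalizedMatrixFunction_s19 G V.character (L.submatrix id γ)
  have hΩ : ∑ γ ∈ Ω, (Complex.normSq (d γ) : ℂ) = ∑ γ, star (d γ) * d γ := by
    rw [Finset.sum_filter_of_ne fun γ _ hγ => ?_]
    · simp [Complex.normSq_eq_conj_mul_self]
    contrapose! hγ
    rw [Finset.sum_subtype (F := inferInstance) _ (p := (· ∈ G.precompStabilizer γ))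
      fun _ => by simp] at hγ
    simp [d, Matrix.generalizedMatrixFunction_submatrix_eq_zero G _ L γ
      (V.sum_char_mul_eq_zero _ hγ)]
  have hCB : V.character 1 * ∑ γ, star (d γ) * d γ =
      Fintype.card G * Matrix.generalizedMatrixFunction_s19 G V.character A := by
    rw [Matrix.sum_star_generalizedMatrixFunction_mul_self, ← hA,
      Matrix.generalizedMatrixFunction_s19, Matrix.generalizedMatrixFunction_s19, Finset.mul_sum,
      Finset.mul_sum]
    refine Fintype.sum_congr _ _ fun u => ?_
    rw [← mul_assoc, ← mul_assoc, FDRep.char_one_mul_sum_star_char_mul_char_mul]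
  have hmain : (V.character 1)⁻¹ * Matrix.generalizedMatrixFunction_s19 G V.character A =
      (Fintype.card G : ℂ)⁻¹ * ∑ γ ∈ Ω, (Complex.normSq (d γ) : ℂ) := by
    have := V.char_one_ne_zero
    rw [hΩ]
    field_simp
    linear_combination -hCB
  refine ⟨hmain, hmain ▸ ?_⟩
  have h : (0 : ℝ) ≤ (Fintype.card G : ℝ)⁻¹ * ∑ γ ∈ Ω, Complex.normSq (d γ) :=
    mul_nonneg (by positivity) (Finset.sum_nonneg fun _ _ => Complex.normSq_nonneg _)
  simpa using Complex.zero_le_real.mpr h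

/-- Generalized Cauchy–Binet specialization: for a positive semidefinite `A = L L*`
with `L` lower triangular, a finite `G ≤ Sₙ` and an irreducible character `χ` of `G`,
`(1/χ(e)) d^G_χ(A) = (1/|G|) Σ_{γ ∈ Ω} |d^G_χ(L[id|γ])|²` where
`Ω = {γ : Σ_{g ∈ G_γ} χ(g) ≠ 0}` and `G_γ = {g ∈ G : γ ∘ g = γ}`; in particular
`(1/χ(e)) d^G_χ(A) ≥ 0`. -/
theorem stmt_19 {n : ℕ} (A L : Matrix (Fin n) (Fin n) ℂ)
    (hL : ∀ i j : Fin n, i < j → L i j = 0)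
    (hA : A = L * L.conjTranspose)
    (G : Subgroup (Equiv.Perm (Fin n))) [Fintype G]
    (V : FDRep ℂ G) [Simple V] :
    ((V.character 1)⁻¹ *
        ∑ g : G, V.character g * ∏ i, A i ((g : Equiv.Perm (Fin n)) i) =
      ((Fintype.card G : ℂ))⁻¹ *
        ∑ γ ∈ Finset.univ.filter (fun γ : Fin n → Fin n =>
            (∑ g ∈ Finset.univ.filter
                (fun g : G => γ ∘ (g : Equiv.Perm (Fin n)) = γ), V.character g) ≠ 0),
          (Complex.normSq
            (∑ σ : G, V.character σ * ∏ j, L j (γ ((σ : Equiv.Perm (Fin n)) j))) : ℂ)) ∧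
    0 ≤ (V.character 1)⁻¹ *
        ∑ g : G, V.character g * ∏ i, A i ((g : Equiv.Perm (Fin n)) i) :=
  stmt_19_general A L hA G V
end
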